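/- Let g(n) = (nC − γ)/√(nV) with C, V > 0 and γ fixed, and F(n) = 1 − Q(g(n)), f(n) = F'(n). If Δn = O(√n) then as n → ∞: 1 − F(n + Δn) = (1 − F(n))·exp{−Δn·g(n)·g'(n)}·(1 + o(1)). -/

import Mathlib

/-!
Mills' ratio: for `x > 0`, `∫ₓ^∞ e^{-t²/2} dt` lies between `x/(1+x²)·e^{-x²/2}` and
`e^{-x²/2}/x`, so `Q(x) ~ e^{-x²/2}/(√(2π) x)`. With `a = g(n+Δn)` and `b = g(n)`, both tending
to infinity, the quotient is therefore asymptotic to `exp(-(a²/2 - b²/2 - Δn·g(n)·g'(n))) · b/a`.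
Since `g(n)²/2 = (nC² - 2Cγ + γ²/n)/(2V)`, the exponent is the second-order Taylor remainder
`γ²/(2V) · (Δn/n)²/(n+Δn)`, which tends to `0` because `Δn = O(√n) = o(n)`; and `b/a → 1`
because `g(n) ~ C√(n/V)`.
-/

open Filter Asymptotics MeasureTheory

noncomputable def gaussQ (x : ℝ) : ℝ :=
  (Real.sqrt (2 * Real.pi))⁻¹ * ∫ t in Set.Ici x, Real.exp (-(t ^ 2) / 2)

open Real Set Topology

section MillsRatio

lemma hasDerivAt_neg_exp_neg_sq_div_two (t : ℝ) :
    HasDerivAt (fun t => -exp (-t ^ 2 / 2)) (t * exp (-t ^ 2 / 2)) t := by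
  have h : HasDerivAt (fun t : ℝ => -t ^ 2 / 2) (-t) t :=
    ((hasDerivAt_pow 2 t).neg.div_const 2).congr_deriv (by norm_num; ring)
  exact h.exp.neg.congr_deriv (by ring)

lemma hasDerivAt_neg_exp_neg_sq_div_two_div {t : ℝ} (ht : t ≠ 0) :
    HasDerivAt (fun t => -exp (-t ^ 2 / 2) / t) ((1 + (t ^ 2)⁻¹) * exp (-t ^ 2 / 2)) t :=
  ((hasDerivAt_neg_exp_neg_sq_div_two t).div (hasDerivAt_id t) ht).congr_deriv
    (by simp only [id]; field_simp; ring)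

lemma tendsto_exp_neg_sq_div_two_atTop : Tendsto (fun t => exp (-t ^ 2 / 2)) atTop (𝓝 0) := by
  refine tendsto_exp_atBot.comp ?_
  have := (tendsto_pow_atTop (α := ℝ) two_ne_zero).atTop_div_const (two_pos (α := ℝ))
  simpa [neg_div] using this

lemma integrable_exp_neg_sq_div_two : Integrable fun t : ℝ => exp (-t ^ 2 / 2) := by
  convert integrable_exp_neg_mul_sq (b := 1 / 2) one_half_pos using 3
  ring

lemma integrable_mul_exp_neg_sq_div_two : Integrable fun t : ℝ => t * exp (-t ^ 2 / 2) := by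
  convert integrable_mul_exp_neg_mul_sq (b := 1 / 2) one_half_pos using 4
  ring

lemma integral_Ioi_mul_exp_neg_sq_div_two (x : ℝ) :
    ∫ t in Ioi x, t * exp (-t ^ 2 / 2) = exp (-x ^ 2 / 2) := by
  rw [integral_Ioi_of_hasDerivAt_of_tendsto' (fun t _ => hasDerivAt_neg_exp_neg_sq_div_two t)
    integrable_mul_exp_neg_sq_div_two.integrableOn
    (by simpa using tendsto_exp_neg_sq_div_two_atTop.neg)]
  ring

lemma integral_Ioi_exp_neg_sq_div_two_le {x : ℝ} (hx : 0 < x) :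
    ∫ t in Ioi x, exp (-t ^ 2 / 2) ≤ exp (-x ^ 2 / 2) / x := by
  rw [← integral_Ioi_mul_exp_neg_sq_div_two x, ← integral_div]
  refine setIntegral_mono_on integrable_exp_neg_sq_div_two.integrableOn
    (integrable_mul_exp_neg_sq_div_two.integrableOn.div_const x) measurableSet_Ioi fun t ht => ?_
  rw [mul_div_right_comm]
  exact le_mul_of_one_le_left (exp_pos _).le ((one_le_div hx).2 (le_of_lt ht))

lemma mul_exp_neg_sq_div_two_le_integral_Ioi {x : ℝ} (hx : 0 < x) :
    x / (1 + x ^ 2) * exp (-x ^ 2 / 2) ≤ ∫ t in Ioi x, exp (-t ^ 2 / 2) := by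
  have hderiv : ∀ t ∈ Ici x, HasDerivAt (fun t => -exp (-t ^ 2 / 2) / t)
      ((1 + (t ^ 2)⁻¹) * exp (-t ^ 2 / 2)) t :=
    fun t ht => hasDerivAt_neg_exp_neg_sq_div_two_div (hx.trans_le ht).ne'
  have hnonneg : ∀ t ∈ Ioi x, 0 ≤ (1 + (t ^ 2)⁻¹) * exp (-t ^ 2 / 2) := fun t _ => by positivity
  have hlim : Tendsto (fun t => -exp (-t ^ 2 / 2) / t) atTop (𝓝 0) := by
    simpa [div_eq_mul_inv] using tendsto_exp_neg_sq_div_two_atTop.neg.mul tendsto_inv_atTop_zero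
  have hle : ∫ t in Ioi x, (1 + (t ^ 2)⁻¹) * exp (-t ^ 2 / 2)
      ≤ ∫ t in Ioi x, (1 + (x ^ 2)⁻¹) * exp (-t ^ 2 / 2) := by
    refine setIntegral_mono_on (integrableOn_Ioi_deriv_of_nonneg' hderiv hnonneg hlim)
      (integrable_exp_neg_sq_div_two.integrableOn.const_mul _) measurableSet_Ioi fun t ht => ?_
    gcongr
    exact ht.le
  rw [integral_Ioi_of_hasDerivAt_of_nonneg' hderiv hnonneg hlim, integral_const_mul] at hle
  calc x / (1 + x ^ 2) * exp (-x ^ 2 / 2) = (0 - -exp (-x ^ 2 / 2) / x) / (1 + (x ^ 2)⁻¹) := by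
        field_simp
        ring
    _ ≤ _ := by rw [div_le_iff₀ (by positivity)]; linarith

lemma integral_Ioi_exp_neg_sq_div_two_isEquivalent :
    (fun x => ∫ t in Ioi x, exp (-t ^ 2 / 2)) ~[atTop] fun x => exp (-x ^ 2 / 2) / x := by
  refine isEquivalent_of_tendsto_one ?_
  have hlower : Tendsto (fun x : ℝ => (1 + (x ^ 2)⁻¹)⁻¹) atTop (𝓝 1) := by
    simpa using ((tendsto_inv_atTop_zero.comp (tendsto_pow_atTop (α := ℝ) two_ne_zero)).const_add
      1).inv₀ (by norm_num)
  refine tendsto_of_tendsto_of_tendsto_of_le_of_le' hlower tendsto_const_nhds ?_ ?_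
  all_goals
    filter_upwards [eventually_gt_atTop 0] with x hx
    have hM : 0 < exp (-x ^ 2 / 2) / x := by positivity
    simp only [Pi.div_apply]
  · rw [le_div_iff₀ hM]
    refine le_of_eq_of_le ?_ (mul_exp_neg_sq_div_two_le_integral_Ioi hx)
    field_simp
    ring
  · exact (div_le_one hM).2 (integral_Ioi_exp_neg_sq_div_two_le hx)

theorem gaussQ_isEquivalent_atTop :
    gaussQ ~[atTop] fun x => (√(2 * π))⁻¹ * (exp (-x ^ 2 / 2) / x) := by
  have hQ : gaussQ = fun x => (√(2 * π))⁻¹ * ∫ t in Ioi x, exp (-t ^ 2 / 2) :=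
    funext fun x => by rw [gaussQ, integral_Ici_eq_integral_Ioi]
  rw [hQ]
  exact IsEquivalent.refl.mul integral_Ioi_exp_neg_sq_div_two_isEquivalent

end MillsRatio

lemma Asymptotics.IsEquivalent.sqrt {α : Type*} {l : Filter α} {u v : α → ℝ}
    (hv : ∀ᶠ x in l, 0 ≤ v x) (h : u ~[l] v) : (fun x => √(u x)) ~[l] fun x => √(v x) := by
  have hv' : v =ᶠ[l] fun x => max (v x) 0 := hv.mono fun x hx => (max_eq_left hx).symm
  have h' : (fun x => u x ^ (1 / 2 : ℝ)) ~[l] fun x => max (v x) 0 ^ (1 / 2 : ℝ) :=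
    (h.congr_right hv').rpow fun x => le_max_right (v x) 0
  simp only [← Real.sqrt_eq_rpow] at h'
  exact h'.congr_right (hv'.fun_comp Real.sqrt).symm

lemma isLittleO_sqrt_id_atTop : (fun x : ℝ => √x) =o[atTop] id := by
  have h := (isLittleO_pow_pow_atTop_of_lt (𝕜 := ℝ) one_lt_two).comp_tendsto tendsto_sqrt_atTop
  refine (h.congr_left fun x => by simp).congr' EventuallyEq.rfl ?_
  filter_upwards [eventually_ge_atTop 0] with x hx
  simp [sq_sqrt hx]

lemma isEquivalent_id_add_of_isLittleO {α : Type*} [NormedAddCommGroup α] {l : Filter α}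
    {Δ : α → α} (hΔ : Δ =o[l] id) : (fun x => x + Δ x) ~[l] id :=
  hΔ.congr_left fun x => by simp

lemma tendsto_id_add_atTop_of_isLittleO {Δ : ℝ → ℝ} (hΔ : Δ =o[atTop] id) :
    Tendsto (fun x => x + Δ x) atTop atTop :=
  (isEquivalent_id_add_of_isLittleO hΔ).symm.tendsto_atTop tendsto_id

noncomputable def normalArg (C V γ n : ℝ) : ℝ := (n * C - γ) / √(n * V)

section NormalArg

variable {C V γ n : ℝ}

lemma normalArg_sq (hV : 0 < V) (hn : 0 < n) :
    normalArg C V γ n ^ 2 = (n * C ^ 2 - 2 * C * γ + γ ^ 2 / n) / V := by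
  rw [normalArg, div_pow, sq_sqrt (mul_pos hn hV).le]
  field_simp
  ring

lemma hasDerivAt_normalArg (hV : 0 < V) (hn : 0 < n) :
    HasDerivAt (normalArg C V γ) ((n * C + γ) / (2 * n * √(n * V))) n := by
  have hnV : 0 < n * V := mul_pos hn hV
  have hs : √(n * V) ^ 2 = n * V := sq_sqrt hnV.le
  have hs0 : √(n * V) ≠ 0 := (sqrt_pos.2 hnV).ne'
  refine (((hasDerivAt_mul_const C).sub_const γ).div ((hasDerivAt_mul_const V).sqrt hnV.ne')
    hs0).congr_deriv ?_
  field_simp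
  linear_combination (n * C - γ) * hs

lemma normalArg_mul_deriv (hV : 0 < V) (hn : 0 < n) :
    normalArg C V γ n * deriv (normalArg C V γ) n = (C ^ 2 - γ ^ 2 / n ^ 2) / (2 * V) := by
  rw [(hasDerivAt_normalArg hV hn).deriv, normalArg]
  have hnV : 0 < n * V := mul_pos hn hV
  have hs : √(n * V) ^ 2 = n * V := sq_sqrt hnV.le
  have hs0 : √(n * V) ≠ 0 := (sqrt_pos.2 hnV).ne'
  field_simp
  linear_combination (γ ^ 2 - n ^ 2 * C ^ 2) * hs

lemma normalArg_taylor_remainder_eq {d : ℝ} (hV : 0 < V) (hn : 0 < n) (hnd : 0 < n + d) :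
    normalArg C V γ (n + d) ^ 2 / 2 - normalArg C V γ n ^ 2 / 2
      - d * normalArg C V γ n * deriv (normalArg C V γ) n
      = γ ^ 2 / (2 * V) * ((d / n) ^ 2 / (n + d)) := by
  rw [mul_assoc d, normalArg_sq hV hnd, normalArg_sq hV hn, normalArg_mul_deriv hV hn]
  field_simp
  ring

lemma normalArg_isEquivalent (hC : C ≠ 0) (hV : 0 < V) :
    normalArg C V γ ~[atTop] fun n => C / √V * √n := by
  refine isEquivalent_of_tendsto_one ?_
  have h : Tendsto (fun n : ℝ => 1 - γ / C * n⁻¹) atTop (𝓝 1) := by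
    simpa using (tendsto_inv_atTop_zero.const_mul (γ / C)).const_sub 1
  refine h.congr' ?_
  filter_upwards [eventually_gt_atTop 0] with n hn
  have hsn : √n ^ 2 = n := sq_sqrt hn.le
  have hsV : 0 < √V := sqrt_pos.2 hV
  have hsn0 : 0 < √n := sqrt_pos.2 hn
  rw [Pi.div_apply, normalArg, sqrt_mul hn.le]
  field_simp
  linear_combination (C * n - γ) * hsn

lemma tendsto_normalArg_atTop (hC : 0 < C) (hV : 0 < V) :
    Tendsto (normalArg C V γ) atTop atTop :=
  (normalArg_isEquivalent hC.ne' hV).symm.tendsto_atTop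
    (tendsto_sqrt_atTop.const_mul_atTop (by positivity))

variable {Δ : ℝ → ℝ}

lemma normalArg_comp_add_isEquivalent (hC : C ≠ 0) (hV : 0 < V) (hΔ : Δ =o[atTop] id) :
    (fun n => normalArg C V γ (n + Δ n)) ~[atTop] normalArg C V γ := by
  have h := normalArg_isEquivalent (γ := γ) hC hV
  refine (h.comp_tendsto (tendsto_id_add_atTop_of_isLittleO hΔ)).trans
    (IsEquivalent.trans ?_ h.symm)
  exact IsEquivalent.refl.mul
    ((isEquivalent_id_add_of_isLittleO hΔ).sqrt (eventually_ge_atTop 0))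

lemma tendsto_normalArg_taylor_remainder (hV : 0 < V) (hΔ : Δ =o[atTop] id) :
    Tendsto (fun n => normalArg C V γ (n + Δ n) ^ 2 / 2 - normalArg C V γ n ^ 2 / 2
      - Δ n * normalArg C V γ n * deriv (normalArg C V γ) n) atTop (𝓝 0) := by
  have hm := tendsto_id_add_atTop_of_isLittleO hΔ
  have h := ((hΔ.tendsto_div_nhds_zero.pow 2).mul (tendsto_inv_atTop_zero.comp hm)).const_mul
    (γ ^ 2 / (2 * V))
  simp only [id, zero_pow two_ne_zero, mul_zero] at h
  refine h.congr' ?_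
  filter_upwards [eventually_gt_atTop 0, hm.eventually_gt_atTop 0] with n hn hnΔ
  rw [normalArg_taylor_remainder_eq hV hn hnΔ, div_eq_mul_inv _ (n + Δ n)]
  rfl

end NormalArg

/-- Gaussian tail under a blocklength perturbation: with `g(n) = (nC - γ)/√(nV)`,
`F(n) = 1 - Q(g(n))`, and `Δn = O(√n)`, one has
`1 - F(n + Δn) = (1 - F(n))·exp{-Δn·g(n)·g'(n)}·(1 + o(1))` as `n → ∞`. -/
theorem tail_perturbation (C V γ : ℝ) (hC : 0 < C) (hV : 0 < V)
    (g F : ℝ → ℝ)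
    (hg : ∀ n : ℝ, g n = (n * C - γ) / Real.sqrt (n * V))
    (hF : ∀ n : ℝ, F n = 1 - gaussQ (g n))
    (Δ : ℝ → ℝ)
    (hΔ : Δ =O[atTop] fun n => Real.sqrt n) :
    Filter.Tendsto
      (fun n => (1 - F (n + Δ n)) /
        ((1 - F n) * Real.exp (-(Δ n * g n * deriv g n))))
      Filter.atTop (nhds 1) := by
  obtain rfl : g = normalArg C V γ := funext hg
  have hΔo : Δ =o[atTop] id := hΔ.trans_isLittleO isLittleO_sqrt_id_atTop
  have hb : Tendsto (normalArg C V γ) atTop atTop := tendsto_normalArg_atTop hC hV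
  have ha : Tendsto (fun n => normalArg C V γ (n + Δ n)) atTop atTop :=
    hb.comp (tendsto_id_add_atTop_of_isLittleO hΔo)
  have hQ := gaussQ_isEquivalent_atTop
  -- Mills' ratio turns the quotient into `exp (-remainder) * g n / g (n + Δ n)`
  have hequiv := (hQ.comp_tendsto ha).div ((hQ.comp_tendsto hb).mul
    (IsEquivalent.refl (u := fun n => exp (-(Δ n * normalArg C V γ n *
      deriv (normalArg C V γ) n)))))
  have hratio : Tendsto (fun n => normalArg C V γ n / normalArg C V γ (n + Δ n)) atTop (𝓝 1) :=
    (isEquivalent_iff_tendsto_one (ha.eventually_ne_atTop 0)).mp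
      (normalArg_comp_add_isEquivalent hC.ne' hV hΔo).symm
  have hlim := (tendsto_normalArg_taylor_remainder (C := C) (γ := γ) hV hΔo).neg.rexp.mul hratio
  rw [neg_zero, exp_zero, one_mul] at hlim
  simp only [hF, sub_sub_cancel]
  refine hequiv.symm.tendsto_nhds (hlim.congr' ?_)
  filter_upwards [ha.eventually_gt_atTop 0, hb.eventually_gt_atTop 0] with n han hbn
  simp only [Pi.div_apply, Pi.mul_apply, Function.comp_apply]
  rw [show ∀ x y z : ℝ, -(x ^ 2 / 2 - y ^ 2 / 2 - z) = -x ^ 2 / 2 - (-y ^ 2 / 2) - -z by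
    intros; ring, exp_sub, exp_sub]
  field_simp
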